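/- There exist universal constants a₀, c₀ > 0 (independent of B and δ) such that for every B ≥ 1 and every δ = (δ_1,…,δ_B) with each |δ_t| ≤ 1/4 satisfying KL(P_δ ‖ P_0) ≥ a₀, the log-likelihood ratio L satisfies P_δ( L ≤ (1/2)·KL(P_δ ‖ P_0) ) ≤ exp(−c₀·KL(P_δ ‖ P_0)). -/

import Mathlib

/-!
Chernoff bound for `-L`. Under `P_δ` the coordinates are independent, so the moment generating
function of `K - L` (with `K = KL(P_δ ‖ P_0) = E L`) factorises over coordinates. In one
coordinate the log-likelihood ratio takes two values at distance `|log ((1 + 2d)/(1 - 2d))| ≤ 8|d|`,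
so its variance is at most `16 d²`, whereas the coordinate's divergence is at least `2d²/3`. With
`eᵘ ≤ 1 + u + u²` for `|u| ≤ 1` this gives `E exp (θ (K - L)) ≤ exp (24 θ² K)` for `θ ≤ 1/2`, and
Markov's inequality at `θ = 1/96` yields `P_δ (L ≤ K/2) ≤ exp (-θK/2 + 24 θ² K) = exp (-K/384)`.
-/

open Real

/-- Probability mass of a Bernoulli(p) outcome. -/
def bernPMF (p : ℝ) : Bool → ℝ := fun b => if b then p else 1 - p

/-- Probability mass function of the product measure `P_δ` on `{0,1}^B` whose `t`-th
coordinate is `Bernoulli(1/2 + δ t)`. -/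
noncomputable def prodPMF (B : ℕ) (δ : Fin B → ℝ) (y : Fin B → Bool) : ℝ :=
  ∏ t, bernPMF (1/2 + δ t) (y t)

/-- KL budget `K(δ) = KL(P_δ ‖ P_0)` where `P_0` is the uniform measure on `{0,1}^B`. -/
noncomputable def klProd (B : ℕ) (δ : Fin B → ℝ) : ℝ :=
  ∑ y : Fin B → Bool,
    prodPMF B δ y * Real.log (prodPMF B δ y / prodPMF B (fun _ => 0) y)

/-- Probability of an event `E ⊆ {0,1}^B` under the product measure `P_δ`. -/
noncomputable def probEvent (B : ℕ) (δ : Fin B → ℝ) (E : Set (Fin B → Bool)) : ℝ :=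
  ∑ y : Fin B → Bool, E.indicator (prodPMF B δ) y

/-- Log-likelihood ratio of `P_δ` against `P_0` at outcome `y ∈ {0,1}^B`:
`L(y) = Σ_t [ y_t·log(2(1/2+δ_t)) + (1−y_t)·log(2(1/2−δ_t)) ]`. -/
noncomputable def llr (B : ℕ) (δ : Fin B → ℝ) (y : Fin B → Bool) : ℝ :=
  ∑ t, (if y t then Real.log (2 * (1/2 + δ t)) else Real.log (2 * (1/2 - δ t)))

open Finset

lemma sum_mul_exp_le_exp_sum_mul_sq {ι : Type*} (s : Finset ι) {w u : ι → ℝ}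
    (hw : ∀ i ∈ s, 0 ≤ w i) (hw_sum : ∑ i ∈ s, w i = 1) (hu_mean : ∑ i ∈ s, w i * u i = 0)
    (hu : ∀ i ∈ s, |u i| ≤ 1) :
    ∑ i ∈ s, w i * exp (u i) ≤ exp (∑ i ∈ s, w i * u i ^ 2) := by
  have hexp : ∀ i ∈ s, exp (u i) ≤ 1 + u i + u i ^ 2 := fun i hi => by
    linarith [(abs_le.1 (Real.abs_exp_sub_one_sub_id_le (hu i hi))).2]
  calc ∑ i ∈ s, w i * exp (u i) ≤ ∑ i ∈ s, w i * (1 + u i + u i ^ 2) :=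
        sum_le_sum fun i hi => mul_le_mul_of_nonneg_left (hexp i hi) (hw i hi)
    _ = ∑ i ∈ s, w i * u i ^ 2 + 1 := by
        simp only [mul_add, mul_one, sum_add_distrib, hw_sum, hu_mean]; ring
    _ ≤ exp (∑ i ∈ s, w i * u i ^ 2) := add_one_le_exp _

lemma abs_log_sub_log_le {p q r : ℝ} (hr : 0 < r) (hp : r ≤ p) (hq : r ≤ q) :
    |log p - log q| ≤ |p - q| / r := by
  have key : ∀ {p q : ℝ}, r ≤ p → r ≤ q → log p - log q ≤ |p - q| / r := fun {p q} hp hq => by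
    have hq0 : 0 < q := hr.trans_le hq
    rw [← log_div (hr.trans_le hp).ne' hq0.ne']
    calc log (p / q) ≤ p / q - 1 := log_le_sub_one_of_pos (div_pos (hr.trans_le hp) hq0)
      _ = (p - q) / q := by field_simp
      _ ≤ |p - q| / q := by gcongr; exact le_abs_self _
      _ ≤ |p - q| / r := by gcongr
  rw [abs_le]
  exact ⟨by linarith [abs_sub_comm p q ▸ key hq hp], key hp hq⟩

lemma sq_div_three_le_one_add_mul_log_add_one_sub_mul_log {x : ℝ} (hx0 : 0 ≤ x) (hx1 : x < 1) :
    x ^ 2 / 3 ≤ (1 + x) * log (1 + x) + (1 - x) * log (1 - x) := by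
  have h_add : (1 + x) * (2 * x / (x + 2)) ≤ (1 + x) * log (1 + x) :=
    mul_le_mul_of_nonneg_left (le_log_one_add_of_nonneg hx0) (by linarith)
  have h_sub : -x ≤ (1 - x) * log (1 - x) := by
    have h_log := one_sub_inv_le_log_of_pos (sub_pos.2 hx1)
    have h_eq : (1 - x) * (1 - (1 - x)⁻¹) = -x := by
      rw [mul_sub, mul_inv_cancel₀ (sub_pos.2 hx1).ne']; ring
    nlinarith
  have h_alg : x ^ 2 / 3 ≤ (1 + x) * (2 * x / (x + 2)) - x := by
    rw [div_le_iff₀ (by norm_num : (0:ℝ) < 3)]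
    field_simp
    nlinarith
  linarith

noncomputable def llrCoord (d : ℝ) (b : Bool) : ℝ :=
  if b then log (2 * (1/2 + d)) else log (2 * (1/2 - d))

noncomputable def klCoord (d : ℝ) : ℝ :=
  (1/2 + d) * log (2 * (1/2 + d)) + (1/2 - d) * log (2 * (1/2 - d))

lemma sum_bernPMF (p : ℝ) : ∑ b, bernPMF p b = 1 := by
  simp [bernPMF]

lemma bernPMF_pos {d : ℝ} (hd : |d| < 1/2) (b : Bool) : 0 < bernPMF (1/2 + d) b := by
  obtain ⟨hd₁, hd₂⟩ := abs_lt.1 hd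
  cases b <;> simp only [bernPMF, Bool.false_eq_true, if_true, if_false] <;> linarith

lemma sum_bernPMF_mul_llrCoord (d : ℝ) : ∑ b, bernPMF (1/2 + d) b * llrCoord d b = klCoord d := by
  simp only [Fintype.sum_bool, bernPMF, llrCoord, klCoord, if_true, Bool.false_eq_true, if_false]
  ring

lemma log_bernPMF_div_bernPMF_half (d : ℝ) (b : Bool) :
    log (bernPMF (1/2 + d) b / bernPMF (1/2) b) = llrCoord d b := by
  cases b <;> simp only [bernPMF, llrCoord, Bool.false_eq_true, if_true, if_false] <;>
    congr 1 <;> ring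

lemma klCoord_neg (d : ℝ) : klCoord (-d) = klCoord d := by
  simp only [klCoord, ← sub_eq_add_neg, sub_neg_eq_add]
  ring

lemma two_div_three_mul_sq_le_klCoord {d : ℝ} (hd : |d| < 1/2) : 2 / 3 * d ^ 2 ≤ klCoord d := by
  have key : ∀ {d : ℝ}, 0 ≤ d → d < 1/2 → 2 / 3 * d ^ 2 ≤ klCoord d := fun {d} h₀ h₁ => by
    have := sq_div_three_le_one_add_mul_log_add_one_sub_mul_log (x := 2 * d) (by linarith)
      (by linarith)
    have h_eq : klCoord d =
        ((1 + 2 * d) * log (1 + 2 * d) + (1 - 2 * d) * log (1 - 2 * d)) / 2 := by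
      simp only [klCoord, mul_add, mul_sub]; ring_nf
    rw [h_eq]; linarith
  rcases le_total 0 d with h | h
  · exact key h (lt_of_abs_lt hd)
  · simpa [klCoord_neg] using key (neg_nonneg.2 h) (by linarith [(abs_lt.1 hd).1])

lemma sum_bernPMF_mul_exp_le {d θ : ℝ} (hd : |d| ≤ 1/4) (hθ₀ : 0 ≤ θ) (hθ₁ : θ ≤ 1/2) :
    ∑ b, bernPMF (1/2 + d) b * exp (θ * (klCoord d - llrCoord d b)) ≤
      exp (24 * θ ^ 2 * klCoord d) := by
  obtain ⟨hd₁, hd₂⟩ := abs_le.1 hd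
  have hd' : |d| < 1/2 := hd.trans_lt (by norm_num)
  set a := log (2 * (1/2 + d))
  set b := log (2 * (1/2 - d))
  have hk : klCoord d = (1/2 + d) * a + (1/2 - d) * b := rfl
  have h_gap : |a - b| ≤ 8 * |d| := by
    calc |a - b| ≤ |2 * (1/2 + d) - 2 * (1/2 - d)| / (1/2) :=
          abs_log_sub_log_le (by norm_num) (by linarith) (by linarith)
      _ = 8 * |d| := by
          rw [show 2 * (1/2 + d) - 2 * (1/2 - d) = 4 * d by ring, abs_mul]; norm_num; ring
  have h_gap_sq : (a - b) ^ 2 ≤ 64 * d ^ 2 := by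
    nlinarith [abs_nonneg (a - b), abs_nonneg d, sq_abs (a - b), sq_abs d]
  have h_kl := two_div_three_mul_sq_le_klCoord hd'
  have h_dev : ∀ c, |klCoord d - llrCoord d c| ≤ |a - b| := by
    have hp : |1/2 + d| ≤ 1 := abs_le.2 ⟨by linarith, by linarith⟩
    have hq : |1/2 - d| ≤ 1 := abs_le.2 ⟨by linarith, by linarith⟩
    rintro (_ | _)
    · rw [show klCoord d - llrCoord d false = (1/2 + d) * (a - b) by
        rw [show llrCoord d false = b from rfl, hk]; ring,
        abs_mul]
      exact mul_le_of_le_one_left (abs_nonneg _) hp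
    · rw [show klCoord d - llrCoord d true = (1/2 - d) * (b - a) by
        rw [show llrCoord d true = a from rfl, hk]; ring,
        abs_mul, abs_sub_comm b a]
      exact mul_le_of_le_one_left (abs_nonneg _) hq
  refine (sum_mul_exp_le_exp_sum_mul_sq univ (fun b _ => (bernPMF_pos hd' b).le)
    (sum_bernPMF _) ?_ fun c _ => ?_).trans (exp_le_exp.2 ?_)
  · simp only [mul_sub, mul_left_comm _ θ, ← mul_sum, sum_sub_distrib, ← sum_mul, sum_bernPMF,
      sum_bernPMF_mul_llrCoord]
    ring
  · rw [abs_mul, abs_of_nonneg hθ₀]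
    calc θ * |klCoord d - llrCoord d c| ≤ 1/2 * (8 * |d|) :=
          mul_le_mul hθ₁ ((h_dev c).trans h_gap) (abs_nonneg _) (by norm_num)
      _ ≤ 1 := by linarith
  · simp only [Fintype.sum_bool, bernPMF, llrCoord, if_true, Bool.false_eq_true, if_false]
    calc (1/2 + d) * (θ * (klCoord d - a)) ^ 2 + (1 - (1/2 + d)) * (θ * (klCoord d - b)) ^ 2
        = θ ^ 2 * ((1/4 - d ^ 2) * (a - b) ^ 2) := by rw [hk]; ring
      _ ≤ θ ^ 2 * (16 * d ^ 2) :=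
          mul_le_mul_of_nonneg_left
            (by nlinarith [mul_nonneg (sq_nonneg d) (sq_nonneg (a - b))]) (sq_nonneg θ)
      _ ≤ 24 * θ ^ 2 * klCoord d := by nlinarith [sq_nonneg θ]

section ProductMeasure

variable {B : ℕ} {δ : Fin B → ℝ}

lemma prodPMF_nonneg (hδ : ∀ t, |δ t| < 1/2) (y : Fin B → Bool) : 0 ≤ prodPMF B δ y :=
  prod_nonneg fun t _ => (bernPMF_pos (hδ t) (y t)).le

lemma sum_prodPMF_mul_prod (g : Fin B → Bool → ℝ) :
    ∑ y, prodPMF B δ y * ∏ t, g t (y t) = ∏ t, ∑ b, bernPMF (1/2 + δ t) b * g t b := by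
  simp only [prodPMF, ← prod_mul_distrib]
  exact (Fintype.prod_sum fun t b => bernPMF (1/2 + δ t) b * g t b).symm

lemma sum_prodPMF_mul_sum (f : Fin B → Bool → ℝ) :
    ∑ y, prodPMF B δ y * ∑ t, f t (y t) = ∑ t, ∑ b, bernPMF (1/2 + δ t) b * f t b := by
  classical
  simp only [mul_sum]
  rw [sum_comm]
  refine sum_congr rfl fun t _ => ?_
  calc ∑ y, prodPMF B δ y * f t (y t)
      = ∑ y, prodPMF B δ y * ∏ s, (if s = t then f t (y s) else 1) := by
        simp only [prod_ite_eq', mem_univ, if_true]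
    _ = ∏ s, ∑ b, bernPMF (1/2 + δ s) b * (if s = t then f t b else 1) :=
        sum_prodPMF_mul_prod fun s b => if s = t then f t b else 1
    _ = ∑ b, bernPMF (1/2 + δ t) b * f t b := by
        rw [prod_eq_single t (fun s _ hs => by simp only [if_neg hs, mul_one, sum_bernPMF])
          (by simp)]
        simp only [if_true]

lemma llr_eq_sum_llrCoord (y : Fin B → Bool) : llr B δ y = ∑ t, llrCoord (δ t) (y t) := rfl

lemma log_prodPMF_div_uniform (hδ : ∀ t, |δ t| < 1/2) (y : Fin B → Bool) :
    log (prodPMF B δ y / prodPMF B (fun _ => 0) y) = llr B δ y := by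
  have h_ne : ∀ t ∈ univ, bernPMF (1/2 + δ t) (y t) / bernPMF (1/2) (y t) ≠ 0 := fun t _ =>
    div_ne_zero (bernPMF_pos (hδ t) _).ne'
      (by simpa using (bernPMF_pos (d := 0) (by norm_num) (y t)).ne')
  simp only [prodPMF, add_zero, ← prod_div_distrib, log_prod h_ne, log_bernPMF_div_bernPMF_half]
  rfl

lemma klProd_eq_sum_klCoord (hδ : ∀ t, |δ t| < 1/2) : klProd B δ = ∑ t, klCoord (δ t) := by
  simp only [klProd, log_prodPMF_div_uniform hδ, llr_eq_sum_llrCoord, sum_prodPMF_mul_sum,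
    sum_bernPMF_mul_llrCoord]

lemma sum_prodPMF_mul_exp_le (hδ : ∀ t, |δ t| ≤ 1/4) {θ : ℝ} (hθ₀ : 0 ≤ θ) (hθ₁ : θ ≤ 1/2) :
    ∑ y, prodPMF B δ y * exp (θ * (klProd B δ - llr B δ y)) ≤ exp (24 * θ ^ 2 * klProd B δ) := by
  have hδ' : ∀ t, |δ t| < 1/2 := fun t => (hδ t).trans_lt (by norm_num)
  have h_factor : ∀ y, exp (θ * (klProd B δ - llr B δ y)) =
      ∏ t, exp (θ * (klCoord (δ t) - llrCoord (δ t) (y t))) := fun y => by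
    rw [← exp_sum, klProd_eq_sum_klCoord hδ', llr_eq_sum_llrCoord, ← sum_sub_distrib, mul_sum]
  simp_rw [h_factor]
  rw [sum_prodPMF_mul_prod fun t b => exp (θ * (klCoord (δ t) - llrCoord (δ t) b)),
    klProd_eq_sum_klCoord hδ', mul_sum, exp_sum]
  exact prod_le_prod (fun t _ => sum_nonneg fun b _ => by
    have := bernPMF_pos (hδ' t) b; positivity) fun t _ => sum_bernPMF_mul_exp_le (hδ t) hθ₀ hθ₁

lemma probEvent_le_sum_prodPMF_mul_exp (hδ : ∀ t, |δ t| < 1/2) (f : (Fin B → Bool) → ℝ)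
    (c : ℝ) {θ : ℝ} (hθ : 0 ≤ θ) :
    probEvent B δ {y | f y ≤ c} ≤ ∑ y, prodPMF B δ y * exp (θ * (c - f y)) := by
  refine sum_le_sum fun y _ => ?_
  by_cases hy : f y ≤ c
  · rw [Set.indicator_of_mem (show y ∈ {y | f y ≤ c} from hy)]
    exact le_mul_of_one_le_right (prodPMF_nonneg hδ y)
      (one_le_exp (mul_nonneg hθ (sub_nonneg.2 hy)))
  · rw [Set.indicator_of_notMem (show y ∉ {y | f y ≤ c} from hy)]
    exact mul_nonneg (prodPMF_nonneg hδ y) (exp_pos _).le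

end ProductMeasure

/-- **LLR concentration under `P_δ`.** There exist universal constants `a₀, c₀ > 0`
(independent of `B` and `δ`) such that whenever each `|δ_t| ≤ 1/4` and
`KL(P_δ ‖ P_0) ≥ a₀`, the log-likelihood ratio satisfies
`P_δ(L ≤ (1/2)·KL(P_δ‖P_0)) ≤ exp(−c₀·KL(P_δ‖P_0))`. -/
theorem llr_concentration :
    ∃ a₀ > (0 : ℝ), ∃ c₀ > (0 : ℝ), ∀ (B : ℕ), 1 ≤ B → ∀ δ : Fin B → ℝ,
      (∀ t, |δ t| ≤ 1/4) → a₀ ≤ klProd B δ →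
      probEvent B δ {y | llr B δ y ≤ (1/2) * klProd B δ} ≤
        Real.exp (-(c₀ * klProd B δ)) := by
  refine ⟨1, one_pos, 1/384, by norm_num, fun B _ δ hδ _ => ?_⟩
  set K := klProd B δ
  set θ : ℝ := 1/96
  calc probEvent B δ {y | llr B δ y ≤ 1/2 * K}
      ≤ ∑ y, prodPMF B δ y * exp (θ * (1/2 * K - llr B δ y)) :=
        probEvent_le_sum_prodPMF_mul_exp (fun t => (hδ t).trans_lt (by norm_num)) _ _
          (by norm_num)
    _ = exp (-(θ * K / 2)) * ∑ y, prodPMF B δ y * exp (θ * (K - llr B δ y)) := by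
        rw [mul_sum]
        refine sum_congr rfl fun y _ => ?_
        rw [mul_left_comm, ← exp_add]
        ring_nf
    _ ≤ exp (-(θ * K / 2)) * exp (24 * θ ^ 2 * K) := by
        gcongr
        exact sum_prodPMF_mul_exp_le hδ (by norm_num) (by norm_num)
    _ = exp (-(1/384 * K)) := by
        rw [← exp_add]
        congr 1
        norm_num [θ]
        ring
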